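/- The set of λ∈ℂ for which there exists a nonzero function f:Γ→ℂ with f(x_i)=0 for 1≤i≤4 and −Δf(y_i)=λ f(y_i) for all 0≤i≤6 (the Dirichlet eigenvalues of −Δ on Γ) is exactly {1,2,4,5,6}. -/

import Mathlib

noncomputable section

namespace SGpaper

/-- The eleven vertices of the graph `Γ`. -/
inductive GammaV : Type
  | x1 | x2 | x3 | x4 | y0 | y1 | y2 | y3 | y4 | y5 | y6
  deriving DecidableEq

open GammaV

instance : Fintype GammaV where
  elems := {x1, x2, x3, x4, y0, y1, y2, y3, y4, y5, y6}
  complete := fun x => by cases x <;> simp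

/-- The six small triangles (cells) of `Γ`. -/
def cells : List (List GammaV) :=
  [[x1, y1, y5], [y1, y0, y4], [y5, y4, x4], [y0, y2, y3], [y2, x2, y6], [y3, y6, x3]]

/-- Adjacency in `Γ`: two distinct vertices lying in a common small triangle. -/
def adjG (a b : GammaV) : Prop :=
  a ≠ b ∧ ∃ c ∈ cells, a ∈ c ∧ b ∈ c

instance : DecidableRel adjG := fun _ _ => by unfold adjG; infer_instance

/-- The graph Laplacian on `Γ`: `Δf(v) = Σ_{z ∼ v} f(z) - 4 f(v)`. -/
def laplG (f : GammaV → ℂ) (v : GammaV) : ℂ :=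
  (∑ z ∈ Finset.univ.filter (fun z => adjG v z), f z) - 4 * f v

/-- The coarse Laplacian at `y₀`: `Δ_{(-1)}f(y₀) = f(x₁)+f(x₂)+f(x₃)+f(x₄) - 4 f(y₀)`. -/
def laplG1 (f : GammaV → ℂ) : ℂ :=
  f x1 + f x2 + f x3 + f x4 - 4 * f y0

/-- The list `y₀, y₁, …, y₆`. -/
def yv : Fin 7 → GammaV
  | 0 => y0 | 1 => y1 | 2 => y2 | 3 => y3 | 4 => y4 | 5 => y5 | 6 => y6

/-- The list `x₁, …, x₄`. -/
def xv : Fin 4 → GammaV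
  | 0 => x1 | 1 => x2 | 2 => x3 | 3 => x4

/-- The spectral decimation polynomial `R(λ) = λ(5-λ)`. -/
def R : ℂ → ℂ := fun z => z * (5 - z)

/-!
With `f` vanishing on the corners `x₁,…,x₄`, the eigenvalue equations split over the two
subdivided triangles, which meet only in `y₀`. In a triangle with midpoint values `p, q` next
to `y₀` and `r` opposite to it, the difference of the equations at `p` and `q` gives
`(5 - λ)(p - q) = 0`; once `p = q`, eliminating `r` gives `(2 - λ)(5 - λ) p = (4 - λ) f(y₀)`.
Feeding both triangles into the equation at `y₀` yields `(4 - λ)(λ - 1)(λ - 6) f(y₀) = 0`, so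
away from `{1, 2, 4, 5, 6}` first `f(y₀)`, then every midpoint value vanishes. Conversely each
of these five values has an explicit eigenfunction.
-/

section SubdividedTriangle

variable {K : Type*} [Field K] {lam a p q r : K}

theorem subdividedTriangle_eq_and_mul_eq (hp : (4 - lam) * p = a + q + r)
    (hq : (4 - lam) * q = a + p + r) (hr : (4 - lam) * r = p + q) (h5 : lam ≠ 5) :
    p = q ∧ (2 - lam) * (5 - lam) * p = (4 - lam) * a := by
  have hdiff : (5 - lam) * (p - q) = 0 := by linear_combination hp - hq
  have hpq : p = q :=
    sub_eq_zero.1 ((mul_eq_zero.1 hdiff).resolve_left (sub_ne_zero.2 (Ne.symm h5)))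
  subst hpq
  exact ⟨rfl, by linear_combination (4 - lam) * hp + hr⟩

theorem subdividedTriangle_eq_zero (hp : (4 - lam) * p = a + q + r)
    (hq : (4 - lam) * q = a + p + r) (hr : (4 - lam) * r = p + q) (ha : a = 0)
    (h2 : lam ≠ 2) (h4 : lam ≠ 4) (h5 : lam ≠ 5) : p = 0 ∧ q = 0 ∧ r = 0 := by
  obtain ⟨rfl, hp'⟩ := subdividedTriangle_eq_and_mul_eq hp hq hr h5
  have hp0 : p = 0 := by
    rw [ha, mul_zero] at hp'
    simpa [sub_eq_zero, Ne.symm h2, Ne.symm h5] using hp'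
  subst hp0
  refine ⟨rfl, rfl, ?_⟩
  simpa [sub_eq_zero, Ne.symm h4] using hr

end SubdividedTriangle

open GammaV

theorem laplG_y0 (f : GammaV → ℂ) : laplG f y0 = f y1 + f y2 + f y3 + f y4 - 4 * f y0 := by
  rw [laplG, show Finset.univ.filter (adjG y0) = {y1, y2, y3, y4} by decide]
  simp [add_assoc]

theorem laplG_y1 (f : GammaV → ℂ) : laplG f y1 = f x1 + f y0 + f y4 + f y5 - 4 * f y1 := by
  rw [laplG, show Finset.univ.filter (adjG y1) = {x1, y0, y4, y5} by decide]
  simp [add_assoc]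

theorem laplG_y2 (f : GammaV → ℂ) : laplG f y2 = f x2 + f y0 + f y3 + f y6 - 4 * f y2 := by
  rw [laplG, show Finset.univ.filter (adjG y2) = {x2, y0, y3, y6} by decide]
  simp [add_assoc]

theorem laplG_y3 (f : GammaV → ℂ) : laplG f y3 = f x3 + f y0 + f y2 + f y6 - 4 * f y3 := by
  rw [laplG, show Finset.univ.filter (adjG y3) = {x3, y0, y2, y6} by decide]
  simp [add_assoc]

theorem laplG_y4 (f : GammaV → ℂ) : laplG f y4 = f x4 + f y0 + f y1 + f y5 - 4 * f y4 := by
  rw [laplG, show Finset.univ.filter (adjG y4) = {x4, y0, y1, y5} by decide]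
  simp [add_assoc]

theorem laplG_y5 (f : GammaV → ℂ) : laplG f y5 = f x1 + f x4 + f y1 + f y4 - 4 * f y5 := by
  rw [laplG, show Finset.univ.filter (adjG y5) = {x1, x4, y1, y4} by decide]
  simp [add_assoc]

theorem laplG_y6 (f : GammaV → ℂ) : laplG f y6 = f x2 + f x3 + f y2 + f y3 - 4 * f y6 := by
  rw [laplG, show Finset.univ.filter (adjG y6) = {x2, x3, y2, y3} by decide]
  simp [add_assoc]

def IsDirichletEigenpair (lam : ℂ) (f : GammaV → ℂ) : Prop :=
  (∀ i : Fin 4, f (xv i) = 0) ∧ ∀ i : Fin 7, -laplG f (yv i) = lam * f (yv i)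

theorem isDirichletEigenpair_iff (lam : ℂ) (f : GammaV → ℂ) :
    IsDirichletEigenpair lam f ↔
      (f x1 = 0 ∧ f x2 = 0 ∧ f x3 = 0 ∧ f x4 = 0) ∧
      (4 - lam) * f y0 = f y1 + f y2 + f y3 + f y4 ∧
      (4 - lam) * f y1 = f y0 + f y4 + f y5 ∧
      (4 - lam) * f y2 = f y0 + f y3 + f y6 ∧
      (4 - lam) * f y3 = f y0 + f y2 + f y6 ∧
      (4 - lam) * f y4 = f y0 + f y1 + f y5 ∧
      (4 - lam) * f y5 = f y1 + f y4 ∧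
      (4 - lam) * f y6 = f y2 + f y3 := by
  have neg_lapl_eq_iff (s x : ℂ) : -(s - 4 * x) = lam * x ↔ (4 - lam) * x = s := by
    constructor <;> intro h <;> linear_combination h
  simp only [IsDirichletEigenpair, Fin.forall_fin_succ, IsEmpty.forall_iff, and_true,
    Fin.reduceSucc, xv, yv, laplG_y0, laplG_y1, laplG_y2, laplG_y3, laplG_y4, laplG_y5,
    laplG_y6, neg_lapl_eq_iff]
  refine and_congr_right fun ⟨h1, h2, h3, h4⟩ => ?_
  simp only [h1, h2, h3, h4, zero_add]

theorem eq_zero_of_isDirichletEigenpair {lam : ℂ} {f : GammaV → ℂ}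
    (h : IsDirichletEigenpair lam f) (hlam : lam ∉ ({1, 2, 4, 5, 6} : Set ℂ)) : f = 0 := by
  simp only [Set.mem_insert_iff, Set.mem_singleton_iff, not_or] at hlam
  obtain ⟨h1, h2, h4, h5, h6⟩ := hlam
  obtain ⟨⟨hx1, hx2, hx3, hx4⟩, e0, e1, e2, e3, e4, e5, e6⟩ :=
    (isDirichletEigenpair_iff _ _).1 h
  obtain ⟨hl, hl'⟩ := subdividedTriangle_eq_and_mul_eq e1 e4 e5 h5
  obtain ⟨hr, hr'⟩ := subdividedTriangle_eq_and_mul_eq e2 e3 e6 h5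
  have hy0 : f y0 = 0 := by
    have hprod : (4 - lam) * (lam - 1) * (lam - 6) * f y0 = 0 := by
      linear_combination (2 - lam) * (5 - lam) * e0 + 2 * hl' - (2 - lam) * (5 - lam) * hl
        + 2 * hr' - (2 - lam) * (5 - lam) * hr
    simpa [sub_eq_zero, Ne.symm h4, h1, h6] using hprod
  obtain ⟨hy1, hy4, hy5⟩ := subdividedTriangle_eq_zero e1 e4 e5 hy0 h2 h4 h5
  obtain ⟨hy2, hy3, hy6⟩ := subdividedTriangle_eq_zero e2 e3 e6 hy0 h2 h4 h5
  funext v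
  cases v <;> assumption

def dirichletFun (a0 a1 a2 a3 a4 a5 a6 : ℂ) : GammaV → ℂ
  | x1 | x2 | x3 | x4 => 0
  | y0 => a0 | y1 => a1 | y2 => a2 | y3 => a3 | y4 => a4 | y5 => a5 | y6 => a6

open GammaV in
/-- The Dirichlet eigenvalues of `-Δ` on `Γ` (those `λ ∈ ℂ` admitting a
nonzero `f` vanishing at `x₁,…,x₄` with `-Δf(yᵢ) = λ f(yᵢ)` for `0 ≤ i ≤ 6`)
are exactly `{1,2,4,5,6}`. -/
theorem dirichlet_eigenvalues :
    {lam : ℂ | ∃ f : GammaV → ℂ, f ≠ 0 ∧ (∀ i : Fin 4, f (xv i) = 0) ∧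
      ∀ i : Fin 7, -laplG f (yv i) = lam * f (yv i)} = {1, 2, 4, 5, 6} := by
  refine Set.Subset.antisymm (fun lam ⟨f, hf, h⟩ => ?_) ?_
  · by_contra hlam
    exact hf (eq_zero_of_isDirichletEigenpair h hlam)
  -- the eigenfunctions for `λ = 2` and `λ = 5` are odd under exchanging the two triangles,
  -- resp. `y₂` and `y₃`; the other three are invariant under both
  rintro lam (rfl | rfl | rfl | rfl | rfl)
  · exact ⟨dirichletFun 4 3 3 3 3 2 2, Function.ne_iff.2 ⟨y0, by norm_num [dirichletFun]⟩,
      (isDirichletEigenpair_iff _ _).2 (by norm_num [dirichletFun])⟩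
  · exact ⟨dirichletFun 0 (-1) 1 1 (-1) (-1) 1,
      Function.ne_iff.2 ⟨y2, by norm_num [dirichletFun]⟩,
      (isDirichletEigenpair_iff _ _).2 (by norm_num [dirichletFun])⟩
  · exact ⟨dirichletFun (-1) 0 0 0 0 1 1, Function.ne_iff.2 ⟨y0, by norm_num [dirichletFun]⟩,
      (isDirichletEigenpair_iff _ _).2 (by norm_num [dirichletFun])⟩
  · exact ⟨dirichletFun 0 0 (-1) 1 0 0 0, Function.ne_iff.2 ⟨y2, by norm_num [dirichletFun]⟩,
      (isDirichletEigenpair_iff _ _).2 (by norm_num [dirichletFun])⟩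
  · exact ⟨dirichletFun 2 (-1) (-1) (-1) (-1) 1 1,
      Function.ne_iff.2 ⟨y0, by norm_num [dirichletFun]⟩,
      (isDirichletEigenpair_iff _ _).2 (by norm_num [dirichletFun])⟩

end SGpaper
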